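/- If F ⊆ 𝓕 is a skeleton, then |F| ≤ k and there exists σ : 𝓓 → F ∪ {out} such that dist(j, σ(j)) ≤ 5 for every client j with σ(j) ≠ out, |σ⁻¹(i)| ≥ L_i for every i ∈ F, and |σ⁻¹(out)| ≤ m (i.e., F admits a feasible distance-5 assignment). -/

import Mathlib

/-!
Pairs of skeleton centers at distance at most 4 coincide, so the injection `F → F*` is injective
and `|F| ≤ |F*| ≤ k`. For the assignment, a client adjacent to some center of `F` (there is at
most one) is sent there; every other client follows `σ*` to its facility `i*` and then moves on
to a center of `F` within distance 4 of `i*`, for a total distance of at most 5. Each center keeps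
its whole neighborhood, which has at least `L_i` clients, and only the outliers of `σ*` become
outliers.
-/

variable {V : Type*}

/-- A feasible distance-1 assignment in the bipartite graph `G` with clients
`𝓓`, facilities `𝓕`, lower bounds `L`, and bounds `k` (centers) and `m`
(outliers). -/
def FeasibleDist1Assign [Fintype V] [DecidableEq V] (G : SimpleGraph V)
    (𝓓 𝓕 : Finset V) (L : V → ℕ) (k m : ℕ)
    (Fstar : Finset V) (σ : V → Option V) : Prop :=
  Fstar ⊆ 𝓕 ∧ Fstar.card ≤ k ∧
  (∀ j ∈ 𝓓, ∀ i, σ j = some i → i ∈ Fstar ∧ G.Adj j i) ∧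
  (∀ i ∈ Fstar, L i ≤ (𝓓.filter fun j => σ j = some i).card) ∧
  (𝓓.filter fun j => σ j = none).card ≤ m

/-- Separation property: the vertices of `F` are at pairwise distance ≥ 6. -/
def SeparationProp (G : SimpleGraph V) (F : Finset V) : Prop :=
  ∀ i ∈ F, ∀ i' ∈ F, i ≠ i' → 6 ≤ G.edist i i'

/-- Covering property of `F` with respect to `Fstar`. -/
def CoveringProp (G : SimpleGraph V) (F Fstar : Finset V) : Prop :=
  ∀ istar ∈ Fstar, ∃ i ∈ F, G.edist istar i ≤ 4

/-- Injection property of `F` with respect to `Fstar`. -/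
def InjectionProp (G : SimpleGraph V) (F Fstar : Finset V) : Prop :=
  ∃ f : V → V, ∀ i ∈ F, f i ∈ Fstar ∧ G.edist i (f i) ≤ 2

/-- `F` is a skeleton. -/
def IsSkeleton [Fintype V] [DecidableEq V] (G : SimpleGraph V)
    (𝓓 𝓕 : Finset V) (L : V → ℕ) (k m : ℕ) (F : Finset V) : Prop :=
  SeparationProp G F ∧
  ∃ Fstar σ, FeasibleDist1Assign G 𝓓 𝓕 L k m Fstar σ ∧
    CoveringProp G F Fstar ∧ InjectionProp G F Fstar

namespace SimpleGraph

variable (G : SimpleGraph V)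

noncomputable def centerWithin (F : Finset V) (r : ℕ∞) (v : V) : V :=
  if h : ∃ i ∈ F, G.edist v i ≤ r then h.choose else v

variable {G}

theorem centerWithin_spec {F : Finset V} {r : ℕ∞} {v : V} (h : ∃ i ∈ F, G.edist v i ≤ r) :
    G.centerWithin F r v ∈ F ∧ G.edist v (G.centerWithin F r v) ≤ r := by
  rw [centerWithin, dif_pos h]
  exact h.choose_spec

theorem neighborFinset_subset_of_bipartite [Fintype V] [DecidableRel G.Adj] {𝓓 𝓕 : Finset V}
    (hdisj : Disjoint 𝓓 𝓕) (hbip : ∀ u v, G.Adj u v → (u ∈ 𝓓 ∧ v ∈ 𝓕) ∨ (u ∈ 𝓕 ∧ v ∈ 𝓓))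
    {i : V} (hi : i ∈ 𝓕) : G.neighborFinset i ⊆ 𝓓 := by
  intro j hj
  rcases hbip i j ((mem_neighborFinset G i j).mp hj) with ⟨hi𝓓, -⟩ | ⟨-, hj𝓓⟩
  · exact absurd hi (Finset.disjoint_left.mp hdisj hi𝓓)
  · exact hj𝓓

end SimpleGraph

open SimpleGraph

variable {G : SimpleGraph V} {F : Finset V}

theorem SeparationProp.eq_of_edist_lt (hF : SeparationProp G F) {i i' : V} (hi : i ∈ F)
    (hi' : i' ∈ F) (h : G.edist i i' < 6) : i = i' := by
  by_contra hne
  exact (hF i hi i' hi' hne).not_gt h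

theorem SeparationProp.card_le_of_injectionProp {Fstar : Finset V} (hF : SeparationProp G F)
    (hinj : InjectionProp G F Fstar) : F.card ≤ Fstar.card := by
  obtain ⟨f, hf⟩ := hinj
  refine Finset.card_le_card_of_injOn f (fun i hi => (hf i hi).1) fun i hi i' hi' heq => ?_
  refine hF.eq_of_edist_lt hi hi' (lt_of_le_of_lt (b := 4) ?_ (by norm_num))
  calc G.edist i i' ≤ G.edist i (f i) + G.edist (f i') i' := by
        rw [heq]; exact G.edist_triangle
    _ ≤ 2 + 2 := by
        rw [edist_comm (u := f i')]
        exact add_le_add (hf i hi).2 (hf i' hi').2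
    _ = 4 := by norm_num

variable (G F) in
noncomputable def skeletonAssign (σ : V → Option V) (j : V) : Option V :=
  open Classical in
  if ∃ i ∈ F, G.edist j i ≤ 1 then some (G.centerWithin F 1 j)
  else (σ j).map (G.centerWithin F 4)

theorem skeletonAssign_spec {𝓓 Fstar : Finset V} {σ : V → Option V}
    (hσ : ∀ j ∈ 𝓓, ∀ i, σ j = some i → i ∈ Fstar ∧ G.Adj j i) (hcov : CoveringProp G F Fstar)
    {j : V} (hj : j ∈ 𝓓) {i : V} (hi : skeletonAssign G F σ j = some i) :
    i ∈ F ∧ G.edist j i ≤ 5 := by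
  unfold skeletonAssign at hi
  split_ifs at hi with hnear
  · obtain ⟨hmem, hdist⟩ := centerWithin_spec hnear
    cases hi
    exact ⟨hmem, hdist.trans (by norm_num)⟩
  · obtain ⟨istar, hσj, rfl⟩ := Option.map_eq_some_iff.mp hi
    obtain ⟨histar, hadj⟩ := hσ j hj istar hσj
    obtain ⟨hmem, hdist⟩ := centerWithin_spec (hcov istar histar)
    refine ⟨hmem, ?_⟩
    calc G.edist j (G.centerWithin F 4 istar)
        ≤ G.edist j istar + G.edist istar (G.centerWithin F 4 istar) := G.edist_triangle
      _ ≤ 1 + 4 := add_le_add (edist_eq_one_iff_adj.mpr hadj).le hdist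
      _ = 5 := by norm_num

theorem skeletonAssign_eq_of_adj (hF : SeparationProp G F) (σ : V → Option V) {i j : V}
    (hi : i ∈ F) (hadj : G.Adj j i) : skeletonAssign G F σ j = some i := by
  have hnear : ∃ i ∈ F, G.edist j i ≤ 1 := ⟨i, hi, (edist_eq_one_iff_adj.mpr hadj).le⟩
  obtain ⟨hmem, hdist⟩ := centerWithin_spec hnear
  rw [skeletonAssign, if_pos hnear, Option.some_inj]
  refine hF.eq_of_edist_lt hmem hi (lt_of_le_of_lt (b := 2) ?_ (by norm_num))
  calc G.edist (G.centerWithin F 1 j) i ≤ G.edist (G.centerWithin F 1 j) j + G.edist j i :=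
        G.edist_triangle
    _ ≤ 1 + 1 := by
        rw [edist_comm]
        exact add_le_add hdist (edist_eq_one_iff_adj.mpr hadj).le
    _ = 2 := by norm_num

theorem skeletonAssign_eq_none {σ : V → Option V} {j : V}
    (h : skeletonAssign G F σ j = none) : σ j = none := by
  unfold skeletonAssign at h
  split_ifs at h
  exact Option.map_eq_none_iff.mp h

/-- The paper's observation after Definition 3.4: a skeleton `F` has at most
`k` centers and admits a feasible distance-5 assignment. -/
theorem stmt_11 {V : Type*} [Fintype V] [DecidableEq V]
    (G : SimpleGraph V) [DecidableRel G.Adj]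
    (𝓓 𝓕 : Finset V) (hdisj : Disjoint 𝓓 𝓕)
    (hbip : ∀ u v, G.Adj u v → (u ∈ 𝓓 ∧ v ∈ 𝓕) ∨ (u ∈ 𝓕 ∧ v ∈ 𝓓))
    (L : V → ℕ) (hL : ∀ i ∈ 𝓕, L i ≤ (G.neighborFinset i).card)
    (k m : ℕ)
    (F : Finset V) (hFsub : F ⊆ 𝓕)
    (hskel : IsSkeleton G 𝓓 𝓕 L k m F) :
    F.card ≤ k ∧
    ∃ σ : V → Option V,
      (∀ j ∈ 𝓓, ∀ i, σ j = some i → i ∈ F ∧ G.edist j i ≤ 5) ∧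
      (∀ i ∈ F, L i ≤ (𝓓.filter fun j => σ j = some i).card) ∧
      (𝓓.filter fun j => σ j = none).card ≤ m := by
  obtain ⟨hsep, Fstar, σs, ⟨-, hFstar, hσs, -, hout⟩, hcov, hinj⟩ := hskel
  refine ⟨(hsep.card_le_of_injectionProp hinj).trans hFstar, skeletonAssign G F σs,
    fun j hj i hi => skeletonAssign_spec hσs hcov hj hi, fun i hi => ?_, ?_⟩
  · refine (hL i (hFsub hi)).trans (Finset.card_le_card fun j hj => ?_)
    refine Finset.mem_filter.mpr ⟨neighborFinset_subset_of_bipartite hdisj hbip (hFsub hi) hj, ?_⟩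
    exact skeletonAssign_eq_of_adj hsep σs hi ((G.mem_neighborFinset i j).mp hj).symm
  · refine (Finset.card_le_card fun j hj => ?_).trans hout
    obtain ⟨hj𝓓, hnone⟩ := Finset.mem_filter.mp hj
    exact Finset.mem_filter.mpr ⟨hj𝓓, skeletonAssign_eq_none hnone⟩
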